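/- arXiv:2207.10005 — 2 statements merged into one kernel-verified Lean document; each statement's English description precedes it below -/
import Mathlib

section
/- Let π: Y → P¹ be a non-isotrivial elliptic surface over Q given by a Weierstrass equation y² = f(T, x) with coefficients in Q[T], whose group of sections over C equals its group of sections over Q and is free abelian of positive rank (in particular there are no nontrivial 2-torsion sections over C). Let K be a number field and β ∈ K^× an element that is not a square in K. Then the elliptic surface p: Y_K^(β) → P¹ over K defined by βy² = f(T, x), with the section at infinity σ₀ as zero section, has trivial Mordell–Weil group of sections over K: MW(Y_K^(β), p, K) = {σ₀}. -/
open NumberField WeierstrassCurve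

/-- Two ring homs out of `RatFunc k` agreeing on polynomials are equal. -/
private lemma ratfunc_hom_ext {k F : Type*} [Field k] [Field F] {f g : RatFunc k →+* F}
    (h : ∀ p : Polynomial k, f (algebraMap (Polynomial k) (RatFunc k) p) =
      g (algebraMap (Polynomial k) (RatFunc k) p)) : f = g := by
  ext x
  refine RatFunc.induction_on (P := fun z => f z = g z) x fun p q hq => ?_
  show f _ = g _
  rw [map_div₀, map_div₀, h, h]

/-- If the square of a rational function is a constant, that constant is a square. -/
private lemma exists_sq_of_ratfunc_sq {K : Type*} [Field K] {u : RatFunc K} {β : K}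
    (h : u ^ 2 = algebraMap K (RatFunc K) β) : ∃ c : K, c ^ 2 = β := by
  have halg : algebraMap K (RatFunc K) β
      = algebraMap (Polynomial K) (RatFunc K) (Polynomial.C β) := by
    rw [IsScalarTower.algebraMap_apply K (Polynomial K) (RatFunc K)]
    rfl
  have hint : IsIntegral (Polynomial K) u := by
    refine ⟨Polynomial.X ^ 2 - Polynomial.C (Polynomial.C β),
      Polynomial.monic_X_pow_sub_C _ two_ne_zero, ?_⟩
    simp only [Polynomial.eval₂_sub, Polynomial.eval₂_pow, Polynomial.eval₂_X,
      Polynomial.eval₂_C]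
    rw [h, halg, sub_self]
  obtain ⟨p, hp⟩ := IsIntegrallyClosed.isIntegral_iff.mp hint
  have hp2 : p ^ 2 = Polynomial.C β := by
    apply IsFractionRing.injective (Polynomial K) (RatFunc K)
    rw [map_pow, hp, h, halg]
  by_cases hp0 : p = 0
  · refine ⟨0, ?_⟩
    have : Polynomial.C β = 0 := by rw [← hp2, hp0]; ring
    have hβ : β = 0 := by
      simpa using (Polynomial.C_eq_zero).mp this
    simp [hβ]
  · have hdeg : p.natDegree = 0 := by
      have h' := congrArg Polynomial.natDegree hp2
      rw [Polynomial.natDegree_pow, Polynomial.natDegree_C] at h'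
      omega
    obtain ⟨c, hc⟩ := Polynomial.natDegree_eq_zero.mp hdeg
    refine ⟨c, ?_⟩
    have : Polynomial.C (c ^ 2) = Polynomial.C β := by
      rw [map_pow, hc, hp2]
    exact Polynomial.C_injective this

open scoped Classical in
/-- Let `π : Y → ℙ¹` be a non-isotrivial elliptic surface over `ℚ` given by
`y² = f(T,x)` with `f(T,x) = x³ + p₂(T)x² + p₄(T)x + p₆(T)`, `pᵢ ∈ ℚ[T]`, whose group of
sections over `ℂ` equals its group of sections over `ℚ` and is free abelian (torsion-free) of
positive rank.  Sections over a field `k` are identified with points of the generic fiber over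
`k(T)`.  Let `K` be a number field and `β ∈ K^×` not a square in `K`.  Then the twisted
elliptic surface `Y_K^(β) : βy² = f(T,x)` over `K` (in Weierstrass form
`y² = x³ + βp₂x² + β²p₄x + β³p₆` over `K(T)`), with the section at infinity `σ₀` as zero,
has trivial Mordell–Weil group of sections over `K`: every section equals `σ₀`. -/
theorem twisted_surface_trivial_MW
    (p₂ p₄ p₆ : Polynomial ℚ)
    (E : WeierstrassCurve (RatFunc ℚ)) [E.IsElliptic]
    (h1 : E.a₁ = 0) (h3 : E.a₃ = 0)
    (h2 : E.a₂ = algebraMap (Polynomial ℚ) (RatFunc ℚ) p₂)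
    (h4 : E.a₄ = algebraMap (Polynomial ℚ) (RatFunc ℚ) p₄)
    (h6 : E.a₆ = algebraMap (Polynomial ℚ) (RatFunc ℚ) p₆)
    -- non-isotriviality: the `j`-invariant is non-constant
    (hj : ¬∃ c : ℚ, E.j = algebraMap ℚ (RatFunc ℚ) c)
    -- the group of sections over `ℚ` is torsion-free of positive rank
    (hrank : 0 < Module.rank ℤ (Affine.Point E.toAffine))
    (htf : ∀ P : Affine.Point E.toAffine, ∀ n : ℤ, n ≠ 0 → n • P = 0 → P = 0)
    -- the natural inclusion `ℚ(T) → ℂ(T)`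
    (ιQC : RatFunc ℚ →+* RatFunc ℂ)
    (hιQC : ∀ q : Polynomial ℚ, ιQC (algebraMap (Polynomial ℚ) (RatFunc ℚ) q) =
      algebraMap (Polynomial ℂ) (RatFunc ℂ) (q.map (algebraMap ℚ ℂ)))
    -- every section over `ℂ` is already a section over `ℚ`
    (hQC : ∀ a b : RatFunc ℂ, (E.map ιQC).toAffine.Equation a b →
      ∃ a₀ b₀ : RatFunc ℚ, ιQC a₀ = a ∧ ιQC b₀ = b)
    -- the number field `K`, the inclusion `ℚ(T) → K(T)`, and a non-square `β ∈ K^×`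
    (K : Type) [Field K] [NumberField K]
    (ιQK : RatFunc ℚ →+* RatFunc K)
    (hιQK : ∀ q : Polynomial ℚ, ιQK (algebraMap (Polynomial ℚ) (RatFunc ℚ) q) =
      algebraMap (Polynomial K) (RatFunc K) (q.map (algebraMap ℚ K)))
    (β : K) (hβ0 : β ≠ 0) (hβ : ¬∃ c : K, c ^ 2 = β)
    -- the twisted surface, as a Weierstrass curve over `K(T)`
    (Etw : WeierstrassCurve (RatFunc K)) [Etw.IsElliptic]
    (htw1 : Etw.a₁ = 0) (htw3 : Etw.a₃ = 0)
    (htw2 : Etw.a₂ = algebraMap K (RatFunc K) β * ιQK E.a₂)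
    (htw4 : Etw.a₄ = algebraMap K (RatFunc K) β ^ 2 * ιQK E.a₄)
    (htw6 : Etw.a₆ = algebraMap K (RatFunc K) β ^ 3 * ιQK E.a₆) :
    ∀ P : Affine.Point Etw.toAffine, P = 0 := by
  classical
  -- an embedding of `K` into `ℂ`
  haveI : Algebra.IsAlgebraic ℚ K := Algebra.IsAlgebraic.of_finite ℚ K
  let φalg : K →ₐ[ℚ] ℂ := IsAlgClosed.lift
  let φ : K →+* ℂ := φalg.toRingHom
  have hφle : (nonZeroDivisors (Polynomial K)) ≤
      (nonZeroDivisors (Polynomial ℂ)).comap (Polynomial.mapRingHom φ) := by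
    intro p hp
    simp only [Submonoid.mem_comap, Polynomial.coe_mapRingHom]
    rw [mem_nonZeroDivisors_iff_ne_zero] at hp ⊢
    exact (Polynomial.map_ne_zero_iff φ.injective).mpr hp
  let ψ : RatFunc K →+* RatFunc ℂ := RatFunc.mapRingHom (Polynomial.mapRingHom φ) hφle
  have hψa : ∀ p : Polynomial K, ψ (algebraMap (Polynomial K) (RatFunc K) p)
      = algebraMap (Polynomial ℂ) (RatFunc ℂ) (p.map φ) := by
    intro p
    show RatFunc.mapRingHom (Polynomial.mapRingHom φ) hφle (algebraMap _ _ p) = _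
    rw [show (algebraMap (Polynomial K) (RatFunc K)) p
        = algebraMap _ _ p / algebraMap _ _ (1 : Polynomial K) by simp]
    rw [RatFunc.coe_mapRingHom_eq_coe_map, RatFunc.map_apply_div]
    simp
  have hψc : ∀ a : K, ψ (algebraMap K (RatFunc K) a) = algebraMap ℂ (RatFunc ℂ) (φ a) := by
    intro a
    rw [IsScalarTower.algebraMap_apply K (Polynomial K) (RatFunc K),
        IsScalarTower.algebraMap_apply ℂ (Polynomial ℂ) (RatFunc ℂ), hψa]
    simp [Polynomial.algebraMap_eq, Polynomial.map_C]
  have hcomp : ψ.comp ιQK = ιQC := by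
    apply ratfunc_hom_ext
    intro p
    have hQKC : φ.comp (algebraMap ℚ K) = algebraMap ℚ ℂ := by
      ext q
      rw [RingHom.comp_apply, eq_ratCast (algebraMap ℚ K) q, map_ratCast φ q,
        eq_ratCast (algebraMap ℚ ℂ) q]
    have hmm : (p.map (algebraMap ℚ K)).map φ = p.map (algebraMap ℚ ℂ) := by
      rw [Polynomial.map_map, hQKC]
    rw [RingHom.comp_apply, hιQK, hψa, hιQC, hmm]
  have hψι : ∀ z : RatFunc ℚ, ψ (ιQK z) = ιQC z := fun z => by
    rw [← RingHom.comp_apply, hcomp]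
  -- the square root of `β` in `ℂ`
  obtain ⟨c, hc⟩ := IsAlgClosed.exists_pow_nat_eq (φ β) two_pos
  have hφβ : φ β ≠ 0 := fun h => hβ0 (φ.injective (by rw [h, map_zero]))
  have hcne : c ≠ 0 := fun h => hφβ (by rw [← hc, h]; ring)
  set ct : RatFunc ℂ := algebraMap ℂ (RatFunc ℂ) c with hctdef
  have hct : ct ≠ 0 := by
    rw [hctdef]
    exact fun h0 => hcne ((algebraMap ℂ (RatFunc ℂ)).injective (h0.trans (map_zero _).symm))
  set b : RatFunc K := algebraMap K (RatFunc K) β with hbdef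
  have hψb : ψ b = ct ^ 2 := by rw [hbdef, hψc β, ← hc, map_pow]
  intro P
  cases P with
  | zero => rfl
  | @some x y h =>
    exfalso
    set A₂ : RatFunc K := ιQK E.a₂ with hA₂
    set A₄ : RatFunc K := ιQK E.a₄ with hA₄
    set A₆ : RatFunc K := ιQK E.a₆ with hA₆
    have heq0 := (Affine.equation_iff (W := Etw.toAffine) x y).mp h.left
    rw [htw1, htw2, htw3, htw4, htw6] at heq0
    have heq : y ^ 2 = x ^ 3 + b * A₂ * x ^ 2 + b ^ 2 * A₄ * x + b ^ 3 * A₆ := by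
      linear_combination heq0
    have hψeq : (ψ y) ^ 2 = (ψ x) ^ 3 + ct ^ 2 * ψ A₂ * (ψ x) ^ 2
        + ct ^ 4 * ψ A₄ * ψ x + ct ^ 6 * ψ A₆ := by
      have h0 := congrArg ψ heq
      simp only [map_add, map_mul, map_pow, hψb] at h0
      linear_combination h0
    set aC : RatFunc ℂ := ψ x / ct ^ 2 with haC
    set bC : RatFunc ℂ := ψ y / ct ^ 3 with hbC
    have heqC : (E.map ιQC).toAffine.Equation aC bC := by
      rw [Affine.equation_iff]
      simp only [map_a₁, map_a₂, map_a₃, map_a₄, map_a₆, h1, h3, map_zero,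
        zero_mul, mul_zero, add_zero]
      rw [← hψι E.a₂, ← hψι E.a₄, ← hψι E.a₆, ← hA₂, ← hA₄, ← hA₆, haC, hbC]
      field_simp
      linear_combination hψeq
    obtain ⟨a₀, b₀, ha₀, hb₀⟩ := hQC aC bC heqC
    by_cases hy : y = 0
    · -- `(a₀, 0)` would be a nontrivial 2-torsion section of `E`
      have hbC0 : bC = 0 := by rw [hbC, hy, map_zero, zero_div]
      have hb₀0 : b₀ = 0 := ιQC.injective (by rw [hb₀, hbC0, map_zero])
      have hC := (Affine.equation_iff (W := (E.map ιQC).toAffine) aC bC).mp heqC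
      simp only [map_a₁, map_a₂, map_a₃, map_a₄, map_a₆] at hC
      rw [← ha₀, ← hb₀] at hC
      have hC' : ιQC (b₀ ^ 2 + E.a₁ * a₀ * b₀ + E.a₃ * b₀)
          = ιQC (a₀ ^ 3 + E.a₂ * a₀ ^ 2 + E.a₄ * a₀ + E.a₆) := by
        simp only [map_add, map_mul, map_pow]
        linear_combination hC
      have hEeq : E.toAffine.Equation a₀ b₀ :=
        (Affine.equation_iff (W := E.toAffine) a₀ b₀).mpr (ιQC.injective hC')
      have hEns : E.toAffine.Nonsingular a₀ b₀ := Affine.equation_iff_nonsingular.mp hEeq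
      have hQ2 : Affine.Point.some _ _ hEns + Affine.Point.some _ _ hEns = 0 :=
        Affine.Point.add_self_of_Y_eq (h₁ := hEns) (by simp [Affine.negY, h1, h3, hb₀0])
      have hQ0 : Affine.Point.some _ _ hEns = 0 :=
        htf _ 2 two_ne_zero (by rw [two_zsmul]; exact hQ2)
      cases hQ0
    · -- otherwise `β` would be a square in `K`
      have hψy : ψ y ≠ 0 := fun h0 => hy (ψ.injective (by rw [h0, map_zero]))
      have hbC0 : bC ≠ 0 := by
        rw [hbC]; exact div_ne_zero hψy (pow_ne_zero 3 hct)
      have hb₀ne : b₀ ≠ 0 := fun h0 => hbC0 (by rw [← hb₀, h0, map_zero])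
      set w : RatFunc K := ιQK b₀ with hw
      have hwne : w ≠ 0 := fun h0 => hb₀ne (ιQK.injective (by rw [map_zero, ← hw]; exact h0))
      have hψwne : ψ w ≠ 0 := fun h0 => hwne (ψ.injective (by rw [h0, map_zero]))
      have hψw : ψ w = bC := by rw [hw, hψι, hb₀]
      have hct3 : ct ^ 3 = ψ y / ψ w := by
        rw [hψw, hbC]
        field_simp
      have hctψ : ct = ψ (y / w / b) := by
        rw [map_div₀, map_div₀, ← hct3, hψb]
        field_simp
      have hsq : (y / w / b) ^ 2 = algebraMap K (RatFunc K) β := by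
        apply ψ.injective
        rw [map_pow, ← hctψ, ← hbdef, hψb]
      exact hβ (exists_sq_of_ratfunc_sq hsq)
end

section
/- Let y² = f(T, x) define a non-isotrivial elliptic surface over Q whose group of C(T)-points of the generic fiber equals its group of Q(T)-points and is free abelian of positive rank. Let K be a number field and β ∈ K^× not a square. If (a, b) with a, b ∈ K(T) satisfies βb² = f(T, a) and b ≠ 0, then √β · b ∈ Q(T), and consequently √β ∈ K, a contradiction; hence the curve βy² = f(T, x) over K(T) has no K(T)-points with y ≠ 0. -/
open NumberField WeierstrassCurve

/-- If a square in `RatFunc K` is a constant, the constant is a square in `K`. -/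
lemma aux_sq_const {K : Type} [Field K] (β : K) (x : RatFunc K)
    (hx : x ^ 2 = algebraMap K (RatFunc K) β) : ∃ c : K, c ^ 2 = β := by
  have hint : IsIntegral (Polynomial K) x := by
    refine ⟨Polynomial.X ^ 2 - Polynomial.C (Polynomial.C β), ?_, ?_⟩
    · exact (Polynomial.monic_X_pow 2).sub_of_left (by
        simpa using Polynomial.degree_C_le.trans_lt (by norm_num))
    · simp only [Polynomial.eval₂_sub, Polynomial.eval₂_pow, Polynomial.eval₂_X,
        Polynomial.eval₂_C, hx]
      rw [show algebraMap (Polynomial K) (RatFunc K) (Polynomial.C β)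
            = algebraMap K (RatFunc K) β from by
          rw [RatFunc.algebraMap_C, RatFunc.algebraMap_eq_C]]
      ring
  obtain ⟨p, hp⟩ := IsIntegrallyClosed.isIntegral_iff.mp hint
  have hinj : Function.Injective (algebraMap (Polynomial K) (RatFunc K)) :=
    IsFractionRing.injective _ _
  have hpC : p ^ 2 = Polynomial.C β := by
    apply hinj
    rw [map_pow, hp, hx, RatFunc.algebraMap_C, RatFunc.algebraMap_eq_C]
  have hdeg : p.natDegree = 0 := by
    have := congrArg Polynomial.natDegree hpC
    simpa [Polynomial.natDegree_pow] using this
  obtain ⟨c, rfl⟩ : ∃ c, p = Polynomial.C c :=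
    ⟨p.coeff 0, Polynomial.eq_C_of_natDegree_eq_zero hdeg⟩
  refine ⟨c, ?_⟩
  have := hpC
  rw [← Polynomial.C_pow] at this
  exact Polynomial.C_injective this

open scoped Classical in
/-- Let `y² = f(T,x)` (with `f(T,x) = x³ + p₂(T)x² + p₄(T)x + p₆(T)`,
`pᵢ ∈ ℚ[T]`) define a non-isotrivial elliptic surface over `ℚ`, i.e. an elliptic curve `E`
over `ℚ(T)` with non-constant `j`-invariant, whose group of `ℂ(T)`-points equals its group of
`ℚ(T)`-points and is torsion-free of positive rank (in particular no 2-torsion, so no points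
with `y = 0`).  Let `K` be a number field and `β ∈ K^×` not a square.  Then the curve
`βy² = f(T,x)` over `K(T)` has no `K(T)`-points with `y ≠ 0`: a point `(a, b)` with `b ≠ 0`
would give `√β·b ∈ ℚ(T)` and hence `√β ∈ K`, a contradiction. -/
theorem twisted_curve_no_points_over_KT
    (p₂ p₄ p₆ : Polynomial ℚ)
    (E : WeierstrassCurve (RatFunc ℚ)) [E.IsElliptic]
    (h1 : E.a₁ = 0) (h3 : E.a₃ = 0)
    (h2 : E.a₂ = algebraMap (Polynomial ℚ) (RatFunc ℚ) p₂)
    (h4 : E.a₄ = algebraMap (Polynomial ℚ) (RatFunc ℚ) p₄)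
    (h6 : E.a₆ = algebraMap (Polynomial ℚ) (RatFunc ℚ) p₆)
    -- non-isotriviality: the `j`-invariant is non-constant
    (hj : ¬∃ c : ℚ, E.j = algebraMap ℚ (RatFunc ℚ) c)
    -- the Mordell–Weil group over `ℚ(T)` is torsion-free of positive rank
    (hrank : 0 < Module.rank ℤ (Affine.Point E.toAffine))
    (htf : ∀ P : Affine.Point E.toAffine, ∀ n : ℤ, n ≠ 0 → n • P = 0 → P = 0)
    -- the natural inclusion `ℚ(T) → ℂ(T)`
    (ιQC : RatFunc ℚ →+* RatFunc ℂ)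
    (hιQC : ∀ q : Polynomial ℚ, ιQC (algebraMap (Polynomial ℚ) (RatFunc ℚ) q) =
      algebraMap (Polynomial ℂ) (RatFunc ℂ) (q.map (algebraMap ℚ ℂ)))
    -- every `ℂ(T)`-point of `E` already has coordinates in `ℚ(T)`
    (hQC : ∀ a b : RatFunc ℂ, (E.map ιQC).toAffine.Equation a b →
      ∃ a₀ b₀ : RatFunc ℚ, ιQC a₀ = a ∧ ιQC b₀ = b)
    -- the number field `K`, the inclusion `ℚ(T) → K(T)`, and a non-square `β ∈ K^×`
    (K : Type) [Field K] [NumberField K]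
    (ιQK : RatFunc ℚ →+* RatFunc K)
    (hιQK : ∀ q : Polynomial ℚ, ιQK (algebraMap (Polynomial ℚ) (RatFunc ℚ) q) =
      algebraMap (Polynomial K) (RatFunc K) (q.map (algebraMap ℚ K)))
    (β : K) (hβ0 : β ≠ 0) (hβ : ¬∃ c : K, c ^ 2 = β) :
    ¬∃ a b : RatFunc K, b ≠ 0 ∧
      algebraMap K (RatFunc K) β * b ^ 2 =
        a ^ 3 + ιQK E.a₂ * a ^ 2 + ιQK E.a₄ * a + ιQK E.a₆ := by
  rintro ⟨a, b, hb, heq⟩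
  -- an embedding `σ : K → ℂ`
  let σ : K →+* ℂ := (IsAlgClosed.lift (R := ℚ) (M := ℂ) (S := K)).toRingHom
  -- lift it to `K(T) → ℂ(T)`
  have hσpoly : nonZeroDivisors (Polynomial K) ≤ (nonZeroDivisors (Polynomial ℂ)).comap (Polynomial.mapRingHom σ) := by
    intro q hq
    rw [Submonoid.mem_comap, mem_nonZeroDivisors_iff_ne_zero]
    rw [mem_nonZeroDivisors_iff_ne_zero] at hq
    simpa using (Polynomial.map_ne_zero hq : q.map σ ≠ 0)
  let σC : RatFunc K →+* RatFunc ℂ := RatFunc.mapRingHom (Polynomial.mapRingHom σ) hσpoly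
  have hσCalg : ∀ p : Polynomial K,
      σC (algebraMap (Polynomial K) (RatFunc K) p) =
        algebraMap (Polynomial ℂ) (RatFunc ℂ) (p.map σ) := by
    intro p
    have := RatFunc.map_apply_div (Polynomial.mapRingHom σ) hσpoly p 1
    simp at this
    exact this
  have hσCC : ∀ c : K, σC (algebraMap K (RatFunc K) c) = algebraMap ℂ (RatFunc ℂ) (σ c) := by
    intro c
    rw [show algebraMap K (RatFunc K) c
          = algebraMap (Polynomial K) (RatFunc K) (Polynomial.C c) from by
        rw [RatFunc.algebraMap_C, RatFunc.algebraMap_eq_C],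
      hσCalg]
    rw [show (Polynomial.C c).map σ = Polynomial.C (σ c) from Polynomial.map_C σ]
    rw [RatFunc.algebraMap_C, RatFunc.algebraMap_eq_C]
  -- compatibility: `σC ∘ ιQK = ιQC`
  have hcomp : ∀ x : RatFunc ℚ, σC (ιQK x) = ιQC x := by
    have key : ∀ q : Polynomial ℚ,
        σC (ιQK (algebraMap (Polynomial ℚ) (RatFunc ℚ) q)) =
          ιQC (algebraMap (Polynomial ℚ) (RatFunc ℚ) q) := by
      intro q
      rw [hιQK, hσCalg, hιQC, Polynomial.map_map]
      congr 1
      congr 1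
      exact Subsingleton.elim _ _
    intro x
    conv_lhs => rw [← RatFunc.num_div_denom x]
    conv_rhs => rw [← RatFunc.num_div_denom x]
    rw [map_div₀, map_div₀, map_div₀, key, key]
  -- a square root of `σ β` in `ℂ`
  obtain ⟨s, hs⟩ := IsAlgClosed.exists_pow_nat_eq (σ β) (n := 2) (by norm_num)
  -- the point `(σC a, s · σC b)` lies on `E` over `ℂ(T)`
  have hEq : (E.map ιQC).toAffine.Equation (σC a) (algebraMap ℂ (RatFunc ℂ) s * σC b) := by
    rw [Affine.equation_iff]
    have hc := congrArg σC heq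
    simp only [map_add, map_mul, map_pow, hσCC, hcomp] at hc
    simp only [map_a₁, map_a₂, map_a₃, map_a₄, map_a₆, h1, h3, map_zero]
    rw [mul_pow, ← map_pow, hs]
    linear_combination hc
  obtain ⟨a₀, b₀, ha₀, hb₀⟩ := hQC _ _ hEq
  -- the ratio `ιQK b₀ / b` squares to `β`
  have hσCinj : Function.Injective σC := σC.injective
  have hkey : (ιQK b₀) ^ 2 = algebraMap K (RatFunc K) β * b ^ 2 := by
    apply hσCinj
    rw [map_pow, hcomp, hb₀, mul_pow, ← map_pow, hs, map_mul, map_pow, hσCC]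
  have hr : (ιQK b₀ / b) ^ 2 = algebraMap K (RatFunc K) β := by
    rw [div_pow, hkey, mul_div_assoc, div_self (pow_ne_zero 2 hb), mul_one]
  exact hβ (aux_sq_const β _ hr)
end
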